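/- Let c₁, c₂ be points of the Euclidean plane ℝ² with d = dist(c₁, c₂) > 0, and let R₁, R₂ ≥ 0 satisfy d ≥ |R₁ − R₂|. Then: (a) there exists a point c₃ on the segment between c₁ and c₂ such that the union of the closed disks of radius R₁ around c₁ and of radius R₂ around c₂ is contained in the closed disk of radius (d + R₁ + R₂)/2 around c₃; and (b) for every point c and every r ≥ 0 such that both closed disks are contained in the closed disk of radius r around c, one has r ≥ (d + R₁ + R₂)/2. -/

import Mathlib

/-!
The center is the point of the segment `[c₁, c₂]` at distance `(d - R₁ + R₂) / 2` from `c₁` and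
`(d + R₁ - R₂) / 2` from `c₂`; the hypothesis `|R₁ - R₂| ≤ d` makes both distances nonnegative.
Conversely, a closed ball `closedBall x ε` inside `closedBall y δ` forces `ε + dist x y ≤ δ`, as one
sees at the point of the small ball farthest from `y`; adding this for both disks and using the
triangle inequality through the center gives the lower bound.
-/

open Metric

variable {E : Type*} [NormedAddCommGroup E] [NormedSpace ℝ E]

theorem exists_mem_segment_dist_eq_of_add_eq_dist {x y : E} {a b : ℝ} (ha : 0 ≤ a) (hb : 0 ≤ b)
    (hab : a + b = dist x y) : ∃ z ∈ segment ℝ x y, dist x z = a ∧ dist z y = b := by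
  -- if `x = y` then `a = 0`, so the junk value `a / 0 = 0` is the right parameter
  have ht : a / dist x y * dist x y = a :=
    div_mul_cancel_of_imp fun h => by linarith
  have ht₀ : 0 ≤ a / dist x y := div_nonneg ha dist_nonneg
  have ht₁ : a / dist x y ≤ 1 := div_le_one_of_le₀ (by linarith) dist_nonneg
  refine ⟨AffineMap.lineMap x y (a / dist x y), lineMap_mem_segment ℝ x y ⟨ht₀, ht₁⟩, ?_, ?_⟩
  · rw [dist_left_lineMap, Real.norm_of_nonneg ht₀, ht]
  · rw [dist_lineMap_right, Real.norm_of_nonneg (by linarith), sub_mul, one_mul, ht]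
    linarith

theorem exists_mem_segment_closedBall_union_subset {c₁ c₂ : E} {R₁ R₂ : ℝ}
    (h : |R₁ - R₂| ≤ dist c₁ c₂) :
    ∃ c ∈ segment ℝ c₁ c₂,
      closedBall c₁ R₁ ∪ closedBall c₂ R₂ ⊆ closedBall c ((dist c₁ c₂ + R₁ + R₂) / 2) := by
  obtain ⟨h₁, h₂⟩ := abs_le.mp h
  obtain ⟨c, hc, hc₁, hc₂⟩ := exists_mem_segment_dist_eq_of_add_eq_dist
    (a := (dist c₁ c₂ - R₁ + R₂) / 2) (b := (dist c₁ c₂ + R₁ - R₂) / 2)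
    (by linarith) (by linarith) (by ring)
  refine ⟨c, hc, Set.union_subset (closedBall_subset_closedBall' ?_)
    (closedBall_subset_closedBall' ?_)⟩
  · linarith
  · rw [dist_comm]; linarith

theorem add_dist_le_of_closedBall_subset_closedBall [Nontrivial E] {x y : E} {ε δ : ℝ}
    (hε : 0 ≤ ε) (h : closedBall x ε ⊆ closedBall y δ) : ε + dist x y ≤ δ := by
  obtain ⟨v, hv, hray⟩ : ∃ v : E, ‖v‖ = ε ∧ SameRay ℝ v (x - y) := by
    rcases eq_or_ne x y with rfl | hxy
    · obtain ⟨v, hv⟩ := exists_norm_eq E hε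
      exact ⟨v, hv, by simp⟩
    · refine ⟨(ε / ‖x - y‖) • (x - y), ?_, SameRay.sameRay_nonneg_smul_left _ (by positivity)⟩
      rw [norm_smul, Real.norm_of_nonneg (by positivity), div_mul_cancel₀ _ (by simpa [sub_eq_zero])]
  have hfar := h (show v + x ∈ closedBall x ε by simp [hv])
  rwa [mem_closedBall, dist_eq_norm, add_sub_assoc, hray.norm_add, hv, ← dist_eq_norm] at hfar

theorem dist_add_add_le_two_mul_of_closedBall_union_subset [Nontrivial E] {c₁ c₂ c : E}
    {R₁ R₂ r : ℝ} (hR₁ : 0 ≤ R₁) (hR₂ : 0 ≤ R₂)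
    (h : closedBall c₁ R₁ ∪ closedBall c₂ R₂ ⊆ closedBall c r) :
    dist c₁ c₂ + R₁ + R₂ ≤ 2 * r := by
  have h₁ := add_dist_le_of_closedBall_subset_closedBall hR₁ (Set.subset_union_left.trans h)
  have h₂ := add_dist_le_of_closedBall_subset_closedBall hR₂ (Set.subset_union_right.trans h)
  linarith [dist_triangle_right c₁ c₂ c]

theorem smallest_enclosing_disk_general (c₁ c₂ : EuclideanSpace ℝ (Fin 2))
    (R₁ R₂ : ℝ) (hR₁ : 0 ≤ R₁) (hR₂ : 0 ≤ R₂)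
    (h : |R₁ - R₂| ≤ dist c₁ c₂) :
    (∃ c₃ ∈ segment ℝ c₁ c₂,
        closedBall c₁ R₁ ∪ closedBall c₂ R₂ ⊆
          closedBall c₃ ((dist c₁ c₂ + R₁ + R₂) / 2)) ∧
    (∀ (c : EuclideanSpace ℝ (Fin 2)) (r : ℝ), 0 ≤ r →
        closedBall c₁ R₁ ∪ closedBall c₂ R₂ ⊆ closedBall c r →
        (dist c₁ c₂ + R₁ + R₂) / 2 ≤ r) :=
  ⟨exists_mem_segment_closedBall_union_subset h, fun _ _ _ hsub => by
    linarith [dist_add_add_le_two_mul_of_closedBall_union_subset hR₁ hR₂ hsub]⟩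

/-- The smallest disk accommodating two disks: if `d = dist(c₁, c₂) > 0` and
`d ≥ |R₁ − R₂|`, then (a) some point `c₃` on the segment from `c₁` to `c₂`
carries a disk of radius `(d + R₁ + R₂)/2` containing both given disks, and
(b) every disk containing both given disks has radius at least
`(d + R₁ + R₂)/2`. -/
theorem smallest_enclosing_disk (c₁ c₂ : EuclideanSpace ℝ (Fin 2))
    (hd : 0 < dist c₁ c₂) (R₁ R₂ : ℝ) (hR₁ : 0 ≤ R₁) (hR₂ : 0 ≤ R₂)
    (h : |R₁ - R₂| ≤ dist c₁ c₂) :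
    (∃ c₃ ∈ segment ℝ c₁ c₂,
        closedBall c₁ R₁ ∪ closedBall c₂ R₂ ⊆
          closedBall c₃ ((dist c₁ c₂ + R₁ + R₂) / 2)) ∧
    (∀ (c : EuclideanSpace ℝ (Fin 2)) (r : ℝ), 0 ≤ r →
        closedBall c₁ R₁ ∪ closedBall c₂ R₂ ⊆ closedBall c r →
        (dist c₁ c₂ + R₁ + R₂) / 2 ≤ r) :=
  smallest_enclosing_disk_general c₁ c₂ R₁ R₂ hR₁ hR₂ h
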